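/- Let s ≥ 2, h = (1,2) ∈ Sym(4s), g = (1,3,5,…,4s−1)(2,4,6,…,4s) ∈ Sym(4s), and H = ⟨h, h^g, h^{g²}, …, h^{g^{s−1}}⟩. Then H is the internal direct product ⟨(1,2)⟩ × ⟨(3,4)⟩ × ··· × ⟨(2s−1,2s)⟩ ≅ C₂^s, and H ∩ H^g ≅ C₂^{s−1}. -/

import Mathlib

/-!
The generator `g` acts as the shift `x ↦ x + 2` on all but the last two points, so the
conjugates `g ^ i * h * g⁻¹ ^ i` are the transpositions `(2i, 2i+1)`, and conjugating them once
more by `g` gives the transpositions `(2i+2, 2i+3)`.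

Commuting involutions `σ i`, each moving a point `a i` that all the others fix, generate a copy
of `C₂^ι`: the map `f ↦ ∏ σ i ^ f i` is onto the generated subgroup, and evaluating at `a i`
recovers `f i`. The same evaluation at the point `0`, fixed by every element of `H^g`, shows
that `H ∩ H^g` is generated by the transpositions `(2i, 2i+1)` with `i ≥ 1`, all of which lie
in `H^g`.
-/

open Equiv Subgroup Set Function

lemma pow_val_add_of_pow_eq_one {M : Type*} [Monoid M] {n : ℕ} [NeZero n] {x : M}
    (hx : x ^ n = 1) (u v : ZMod n) : x ^ (u + v).val = x ^ u.val * x ^ v.val := by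
  rw [ZMod.val_add, ← pow_eq_pow_mod _ hx, pow_add]

section CommutingInvolutions

variable {G : Type*} [Group G] {ι : Type*} {σ : ι → G}

lemma pairwise_commute_pow_of_commute (hcomm : ∀ i j, Commute (σ i) (σ j)) (s : Finset ι)
    (e : ι → ℕ) : (s : Set ι).Pairwise (Commute on fun i => σ i ^ e i) :=
  fun i _ j _ _ => (hcomm i j).pow_pow _ _

variable [Fintype ι] (σ) (hcomm : ∀ i j, Commute (σ i) (σ j))
  (hinv : ∀ i, σ i ^ 2 = 1)

noncomputable def commutingInvolutionsHom : Multiplicative (ι → ZMod 2) →* G :=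
  MonoidHom.mk'
    (fun f => Finset.univ.noncommProd (fun i => σ i ^ (f.toAdd i).val)
      (pairwise_commute_pow_of_commute hcomm _ _))
    fun _ _ => (Finset.noncommProd_congr rfl
        (fun i _ => pow_val_add_of_pow_eq_one (hinv i) _ _) _).trans
      (Finset.noncommProd_mul_distrib _ _ (pairwise_commute_pow_of_commute hcomm _ _)
        (pairwise_commute_pow_of_commute hcomm _ _) fun i _ j _ _ => (hcomm i j).pow_pow _ _)

lemma commutingInvolutionsHom_apply (f : Multiplicative (ι → ZMod 2)) :
    commutingInvolutionsHom σ hcomm hinv f = Finset.univ.noncommProd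
      (fun i => σ i ^ (f.toAdd i).val) (pairwise_commute_pow_of_commute hcomm _ _) :=
  rfl

variable [DecidableEq ι]

lemma exists_commutingInvolutionsHom_eq_pow_mul (f : Multiplicative (ι → ZMod 2)) (i : ι) :
    ∃ y ∈ closure (σ '' {i}ᶜ),
      commutingInvolutionsHom σ hcomm hinv f = σ i ^ (f.toAdd i).val * y :=
  ⟨(Finset.univ.erase i).noncommProd _ (pairwise_commute_pow_of_commute hcomm _ _),
    noncommProd_mem _ _ fun _ hj =>
      pow_mem (subset_closure (mem_image_of_mem σ (Finset.ne_of_mem_erase hj))) _,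
    (Finset.mul_noncommProd_erase _ (Finset.mem_univ i) _
      (pairwise_commute_pow_of_commute hcomm _ _)
      (pairwise_commute_pow_of_commute hcomm _ _)).symm⟩

lemma commutingInvolutionsHom_range :
    (commutingInvolutionsHom σ hcomm hinv).range = closure (range σ) := by
  refine le_antisymm ?_ ((closure_le (commutingInvolutionsHom σ hcomm hinv).range).2 ?_)
  · rintro _ ⟨f, rfl⟩
    exact noncommProd_mem _ (pairwise_commute_pow_of_commute hcomm _ _) fun i _ =>
      pow_mem (subset_closure (mem_range_self i)) _
  · rintro _ ⟨i, rfl⟩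
    refine ⟨.ofAdd (Pi.single i 1), (Finset.mul_noncommProd_erase _ (Finset.mem_univ i) _
      (pairwise_commute_pow_of_commute hcomm _ _)
      (pairwise_commute_pow_of_commute hcomm _ _)).symm.trans ?_⟩
    rw [Finset.noncommProd_eq_pow_card _ _ _ 1 fun j hj => ?_]
    · simp only [toAdd_ofAdd, Pi.single_eq_same, one_pow, mul_one]
      exact pow_one (σ i)
    · simp [Pi.single_eq_of_ne (Finset.ne_of_mem_erase hj)]

end CommutingInvolutions

lemma eq_zero_of_pow_val_apply_eq_self {α : Type*} {x : Perm α} {p : α} (hx : x p ≠ p)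
    {u : ZMod 2} (hu : (x ^ u.val) p = p) : u = 0 := by
  fin_cases u
  · rfl
  · exact absurd hu hx

section WitnessPoints

variable {α ι : Type*} {σ : ι → Perm α} {a : ι → α}

lemma closure_image_compl_le_stabilizer (hfix : ∀ i j, j ≠ i → σ j (a i) = a i) (i : ι) :
    closure (σ '' {i}ᶜ) ≤ MulAction.stabilizer (Perm α) (a i) :=
  (closure_le _).2 <| by
    rintro _ ⟨j, hj, rfl⟩
    exact hfix i j hj

variable [Fintype ι] [DecidableEq ι]

lemma commutingInvolutionsHom_apply_of_fixed (hcomm : ∀ i j, Commute (σ i) (σ j))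
    (hinv : ∀ i, σ i ^ 2 = 1) (hfix : ∀ i j, j ≠ i → σ j (a i) = a i)
    (f : Multiplicative (ι → ZMod 2)) (i : ι) :
    commutingInvolutionsHom σ hcomm hinv f (a i) = (σ i ^ (f.toAdd i).val) (a i) := by
  obtain ⟨y, hy, hf⟩ := exists_commutingInvolutionsHom_eq_pow_mul σ hcomm hinv f i
  have hya : y (a i) = a i := closure_image_compl_le_stabilizer hfix i hy
  rw [hf, Perm.mul_apply, hya]

lemma commutingInvolutionsHom_injective (hcomm : ∀ i j, Commute (σ i) (σ j))
    (hinv : ∀ i, σ i ^ 2 = 1) (hfix : ∀ i j, j ≠ i → σ j (a i) = a i)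
    (hmove : ∀ i, σ i (a i) ≠ a i) : Injective (commutingInvolutionsHom σ hcomm hinv) := by
  refine (injective_iff_map_eq_one _).2 fun f hf => Multiplicative.toAdd.injective <|
    funext fun i => eq_zero_of_pow_val_apply_eq_self (hmove i) ?_
  rw [← commutingInvolutionsHom_apply_of_fixed hcomm hinv hfix, hf, Perm.one_apply]

theorem nonempty_closure_range_mulEquiv (hcomm : ∀ i j, Commute (σ i) (σ j))
    (hinv : ∀ i, σ i ^ 2 = 1) (hfix : ∀ i j, j ≠ i → σ j (a i) = a i)
    (hmove : ∀ i, σ i (a i) ≠ a i) :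
    Nonempty (closure (range σ) ≃* Multiplicative (ι → ZMod 2)) :=
  ⟨(MulEquiv.subgroupCongr (commutingInvolutionsHom_range σ hcomm hinv)).symm.trans
    (MonoidHom.ofInjective (commutingInvolutionsHom_injective hcomm hinv hfix hmove)).symm⟩

theorem closure_range_inf_stabilizer_le (hcomm : ∀ i j, Commute (σ i) (σ j))
    (hinv : ∀ i, σ i ^ 2 = 1) (hfix : ∀ i j, j ≠ i → σ j (a i) = a i)
    (hmove : ∀ i, σ i (a i) ≠ a i) (i : ι) :
    closure (range σ) ⊓ MulAction.stabilizer (Perm α) (a i) ≤ closure (σ '' {i}ᶜ) := by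
  rintro _ ⟨hx, hfixed⟩
  rw [SetLike.mem_coe, ← commutingInvolutionsHom_range σ hcomm hinv] at hx
  obtain ⟨f, rfl⟩ := hx
  obtain ⟨y, hy, hf⟩ := exists_commutingInvolutionsHom_eq_pow_mul σ hcomm hinv f i
  have hfi : f.toAdd i = 0 := eq_zero_of_pow_val_apply_eq_self (hmove i) <| by
    rw [← commutingInvolutionsHom_apply_of_fixed hcomm hinv hfix]
    exact hfixed
  rwa [hf, hfi, ZMod.val_zero, pow_zero, one_mul]

end WitnessPoints

section PairSwap

variable {n : ℕ}

def pairSwap (k : ℕ) (hk : 2 * k + 1 < n) : Perm (Fin n) :=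
  swap ⟨2 * k, by omega⟩ ⟨2 * k + 1, hk⟩

lemma pairSwap_congr {k l : ℕ} (hkl : k = l) (hk : 2 * k + 1 < n) (hl : 2 * l + 1 < n) :
    pairSwap k hk = pairSwap l hl := by
  subst hkl
  rfl

lemma pairSwap_apply_of_ne {k : ℕ} (hk : 2 * k + 1 < n) {x : Fin n} (h₀ : (x : ℕ) ≠ 2 * k)
    (h₁ : (x : ℕ) ≠ 2 * k + 1) : pairSwap k hk x = x :=
  swap_apply_of_ne_of_ne (fun h => h₀ (by simp [h])) fun h => h₁ (by simp [h])

lemma pairSwap_apply_left_ne {k : ℕ} (hk : 2 * k + 1 < n) :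
    pairSwap k hk ⟨2 * k, by omega⟩ ≠ ⟨2 * k, by omega⟩ := by
  simp [pairSwap, swap_apply_left]

lemma pairSwap_sq {k : ℕ} (hk : 2 * k + 1 < n) : pairSwap k hk ^ 2 = 1 :=
  (sq _).trans (swap_mul_self _ _)

lemma commute_pairSwap {k l : ℕ} (hk : 2 * k + 1 < n) (hl : 2 * l + 1 < n) :
    Commute (pairSwap k hk) (pairSwap l hl) := by
  obtain rfl | hkl := eq_or_ne k l
  · exact Commute.refl _
  refine Perm.Disjoint.commute fun x => ?_
  by_cases hx : (x : ℕ) = 2 * k ∨ (x : ℕ) = 2 * k + 1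
  · exact .inr (pairSwap_apply_of_ne hl (by omega) (by omega))
  · exact .inl (pairSwap_apply_of_ne hk (by omega) (by omega))

theorem nonempty_closure_range_pairSwap_mulEquiv {ι : Type*} [Fintype ι] [DecidableEq ι]
    (κ : ι → ℕ) (hκ : Injective κ) (hn : ∀ i, 2 * κ i + 1 < n) :
    Nonempty
      (closure (range fun i => pairSwap (κ i) (hn i)) ≃* Multiplicative (ι → ZMod 2)) :=
  nonempty_closure_range_mulEquiv (a := fun i => ⟨2 * κ i, by have := hn i; omega⟩)
    (fun _ _ => commute_pairSwap _ _) (fun _ => pairSwap_sq _)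
    (fun i j hji => pairSwap_apply_of_ne _ (by have := hκ.ne hji; simp; omega)
      (by simp; omega))
    fun _ => pairSwap_apply_left_ne _

theorem closure_pairSwap_inf_closure_pairSwap_succ {s : ℕ} (hs : 2 * s + 1 < n) :
    closure (range fun i : Fin s => pairSwap (n := n) i (by omega)) ⊓
        closure (range fun i : Fin s => pairSwap (n := n) (i + 1) (by omega)) =
      closure (range fun j : Fin (s - 1) => pairSwap (n := n) (j + 1) (by omega)) := by
  refine le_antisymm ?_ (le_inf (closure_mono ?_) (closure_mono ?_))
  · obtain rfl | hs0 := Nat.eq_zero_or_pos s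
    · simp [range_eq_empty]
    have hfix0 : closure (range fun i : Fin s => pairSwap (n := n) (i + 1) (by omega)) ≤
        MulAction.stabilizer (Perm (Fin n)) (⟨0, by omega⟩ : Fin n) :=
      (closure_le _).2 <| by
        rintro _ ⟨i, rfl⟩
        exact pairSwap_apply_of_ne _ (by simp) (by simp)
    refine (inf_le_inf_left _ hfix0).trans <| (closure_range_inf_stabilizer_le
      (a := fun i : Fin s => (⟨2 * i, by omega⟩ : Fin n)) (fun _ _ => commute_pairSwap _ _)
      (fun _ => pairSwap_sq _) ?_ (fun _ => pairSwap_apply_left_ne _) ⟨0, hs0⟩).trans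
      (closure_mono ?_)
    · intro i j hji
      exact pairSwap_apply_of_ne _ (by have := Fin.val_ne_of_ne hji; simp; omega) (by simp; omega)
    · rintro _ ⟨i, hi, rfl⟩
      have hi0 : (i : ℕ) ≠ 0 := fun h => hi (Fin.ext h)
      exact ⟨⟨i - 1, by omega⟩, pairSwap_congr (by simp; omega) _ _⟩
  · rintro _ ⟨j, rfl⟩
    exact ⟨⟨j + 1, by omega⟩, rfl⟩
  · rintro _ ⟨j, rfl⟩
    exact ⟨⟨j, by omega⟩, rfl⟩

end PairSwap

section ShiftByTwo

variable {n : ℕ} {g : Perm (Fin n)}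

lemma pow_apply_val_of_shift_two (hg : ∀ x : Fin n, (x : ℕ) + 2 < n → (g x : ℕ) = x + 2)
    (m : ℕ) (x : Fin n) (hx : (x : ℕ) + 2 * m < n) : ((g ^ m) x : ℕ) = x + 2 * m := by
  induction m with
  | zero => simp
  | succ m ih =>
    rw [pow_succ', Perm.mul_apply, hg _ (by rw [ih (by omega)]; omega), ih (by omega)]
    ring

lemma pow_mul_pairSwap_mul_pow_inv_of_shift_two
    (hg : ∀ x : Fin n, (x : ℕ) + 2 < n → (g x : ℕ) = x + 2) {k l : ℕ} (m : ℕ)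
    (hk : 2 * k + 1 < n) (hl : 2 * l + 1 < n) (hkl : l = k + m) :
    g ^ m * pairSwap k hk * (g ^ m)⁻¹ = pairSwap l hl := by
  subst hkl
  rw [pairSwap, ← swap_apply_apply]
  congr 1 <;> ext <;> rw [pow_apply_val_of_shift_two hg _ _ (by simp; omega)] <;> ring

end ShiftByTwo

/-- Points `0, …, 4s-1` stand for the paper's `1, …, 4s`. The paper composes permutations from
left to right, so its conjugate `x^g = g⁻¹ x g` is `g * x * g⁻¹ = MulAut.conj g x` here. -/
theorem stmt7 (s : ℕ) (hs : 2 ≤ s)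
    (h g : Equiv.Perm (Fin (4 * s)))
    (hh : h = Equiv.swap ⟨0, by omega⟩ ⟨1, by omega⟩)
    (hg : ∀ i : Fin (4 * s), (g i : ℕ) =
      if (i : ℕ) % 2 = 0 then (if (i : ℕ) = 4 * s - 2 then 0 else (i : ℕ) + 2)
      else (if (i : ℕ) = 4 * s - 1 then 1 else (i : ℕ) + 2)) :
    Subgroup.closure {x : Equiv.Perm (Fin (4 * s)) |
        ∃ i : Fin s, x = g ^ (i : ℕ) * h * (g ^ (i : ℕ))⁻¹} =
      Subgroup.closure {x : Equiv.Perm (Fin (4 * s)) |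
        ∃ i : Fin s, x = Equiv.swap (⟨2 * (i : ℕ), by have := i.2; omega⟩ : Fin (4 * s))
          ⟨2 * (i : ℕ) + 1, by have := i.2; omega⟩} ∧
    Nonempty
      (↥(Subgroup.closure {x : Equiv.Perm (Fin (4 * s)) |
          ∃ i : Fin s, x = g ^ (i : ℕ) * h * (g ^ (i : ℕ))⁻¹}) ≃*
        Multiplicative (Fin s → ZMod 2)) ∧
    Nonempty
      (↥(Subgroup.closure {x : Equiv.Perm (Fin (4 * s)) |
            ∃ i : Fin s, x = g ^ (i : ℕ) * h * (g ^ (i : ℕ))⁻¹} ⊓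
          Subgroup.map (MulAut.conj g).toMonoidHom
            (Subgroup.closure {x : Equiv.Perm (Fin (4 * s)) |
              ∃ i : Fin s, x = g ^ (i : ℕ) * h * (g ^ (i : ℕ))⁻¹})) ≃*
        Multiplicative (Fin (s - 1) → ZMod 2)) := by
  have hshift : ∀ x : Fin (4 * s), (x : ℕ) + 2 < 4 * s → (g x : ℕ) = x + 2 := fun x hx => by
    rw [hg x]
    split_ifs <;> omega
  have hconj (i : Fin s) :
      g ^ (i : ℕ) * h * (g ^ (i : ℕ))⁻¹ = pairSwap (n := 4 * s) i (by omega) := by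
    rw [hh]
    exact pow_mul_pairSwap_mul_pow_inv_of_shift_two hshift i (k := 0) _ _ (zero_add _).symm
  have hH : {x | ∃ i : Fin s, x = g ^ (i : ℕ) * h * (g ^ (i : ℕ))⁻¹} =
      range fun i : Fin s => pairSwap (n := 4 * s) i (by omega) :=
    Set.ext fun _ => exists_congr fun i => by rw [hconj, eq_comm]
  have hHg : map (MulAut.conj g).toMonoidHom
      (closure (range fun i : Fin s => pairSwap (n := 4 * s) i (by omega))) =
      closure (range fun i : Fin s => pairSwap (n := 4 * s) (i + 1) (by omega)) := by
    rw [MonoidHom.map_closure, ← range_comp]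
    congr
    funext i
    simpa using pow_mul_pairSwap_mul_pow_inv_of_shift_two hshift 1 _ (by omega) rfl
  rw [hH, hHg, closure_pairSwap_inf_closure_pairSwap_succ (by omega)]
  exact ⟨congrArg Subgroup.closure (Set.ext fun _ => exists_congr fun _ => eq_comm),
    nonempty_closure_range_pairSwap_mulEquiv _ Fin.val_injective _,
    nonempty_closure_range_pairSwap_mulEquiv (fun j : Fin (s - 1) => (j : ℕ) + 1)
      (fun _ _ h => Fin.ext (Nat.succ_injective h)) _⟩
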